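/- Worst-case bias bound: Under the bias decomposition hypotheses with R²_ε < 1, the absolute bias satisfies |E_S[w·Y] − E_S[w*·Y]| ≤ sqrt( var_S(Y) · var_S(w) · R²_ε/(1 − R²_ε) ), with equality iff |ρ_{ε,Y}| = 1. -/

import Mathlib

open scoped BigOperators

variable {S : Type*} [Fintype S] [Nonempty S]

/-- Sample mean over the finite sample `S`. -/
noncomputable def mS (f : S → ℝ) : ℝ := (∑ i, f i) / (Fintype.card S : ℝ)

/-- Sample covariance over `S`. -/
noncomputable def covS (f g : S → ℝ) : ℝ := mS (fun i => f i * g i) - mS f * mS g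

/-- Sample variance over `S`. -/
noncomputable def varS (f : S → ℝ) : ℝ := covS f f

/-!
Write `ε = w - w*`. Since `w` and `w*` have the same mean, the bias `E[wY] - E[w*Y]` is exactly
`cov(ε, Y)`, so Cauchy–Schwarz bounds it by `√(var ε · var Y)`, with equality iff `|cor(ε, Y)| = 1`.
The orthogonality `cov(w, ε) = 0` gives the Pythagorean split `var w* = var w + var ε`, and with it
`var w · R²/(1 - R²) = var ε`, which turns the Cauchy–Schwarz bound into the stated one.
-/

omit [Nonempty S] in
lemma mS_sub (f g : S → ℝ) : mS (fun i => f i - g i) = mS f - mS g := by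
  simp only [mS, Finset.sum_sub_distrib, sub_div]

omit [Nonempty S] in
lemma covS_comm (f g : S → ℝ) : covS f g = covS g f := by
  simp only [covS, mul_comm]

omit [Nonempty S] in
lemma covS_sub_left (f g h : S → ℝ) :
    covS (fun i => f i - g i) h = covS f h - covS g h := by
  simp only [covS, sub_mul, mS_sub]
  ring

omit [Nonempty S] in
lemma covS_sub_right (f g h : S → ℝ) :
    covS f (fun i => g i - h i) = covS f g - covS f h := by
  rw [covS_comm, covS_sub_left, covS_comm g, covS_comm h]

lemma covS_eq_mS_mul_sub_mS (f g : S → ℝ) :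
    covS f g = mS (fun i => (f i - mS f) * (g i - mS g)) := by
  have hcard : (Fintype.card S : ℝ) ≠ 0 := Nat.cast_ne_zero.mpr Fintype.card_ne_zero
  simp only [covS, mS, sub_mul, mul_sub, Finset.sum_sub_distrib, ← Finset.sum_mul,
    ← Finset.mul_sum, Finset.sum_const, Finset.card_univ, nsmul_eq_mul]
  field_simp
  ring

omit [Nonempty S] in
lemma mS_mul_sq_le (f g : S → ℝ) :
    mS (fun i => f i * g i) ^ 2 ≤ mS (fun i => f i * f i) * mS (fun i => g i * g i) := by
  simp only [mS, div_mul_div_comm, div_pow, ← sq]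
  gcongr
  simpa only [sq] using Finset.sum_mul_sq_le_sq_mul_sq Finset.univ f g

lemma covS_sq_le_varS_mul_varS (f g : S → ℝ) : covS f g ^ 2 ≤ varS f * varS g := by
  simp only [varS, covS_eq_mS_mul_sub_mS f g, covS_eq_mS_mul_sub_mS f f,
    covS_eq_mS_mul_sub_mS g g]
  exact mS_mul_sq_le _ _

lemma abs_covS_le_sqrt (f g : S → ℝ) : |covS f g| ≤ Real.sqrt (varS f * varS g) := by
  rw [← Real.sqrt_sq_eq_abs]
  exact Real.sqrt_le_sqrt (covS_sq_le_varS_mul_varS f g)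

omit [Nonempty S] in
lemma mS_mul_sub_mS_mul_eq_covS {w wstar : S → ℝ} (hm : mS w = mS wstar) (Y : S → ℝ) :
    mS (fun i => w i * Y i) - mS (fun i => wstar i * Y i) = covS (fun i => w i - wstar i) Y := by
  simp only [covS, sub_mul, mS_sub, hm, sub_self, zero_mul, sub_zero]

omit [Nonempty S] in
lemma varS_eq_add_of_covS_sub_eq_zero {w wstar : S → ℝ}
    (hproj : covS w (fun i => w i - wstar i) = 0) :
    varS wstar = varS w + varS (fun i => w i - wstar i) := by
  rw [covS_sub_right] at hproj
  simp only [varS, covS_sub_left, covS_sub_right, covS_comm wstar w] at hproj ⊢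
  linarith

lemma div_one_sub_div_of_eq_add {a b c : ℝ} (ha : a ≠ 0) (hc : c = a + b) (hc0 : c ≠ 0) :
    a * ((b / c) / (1 - b / c)) = b := by
  have : 1 - b / c = a / c := by field_simp; linarith
  rw [this]
  field_simp

theorem worst_case_bias_bound (w wstar Y : S → ℝ)
    (hw : mS w = 1) (hws : mS wstar = 1)
    (hproj : covS w (fun i => w i - wstar i) = 0)
    (hvws : 0 < varS wstar)
    (hveps : 0 < varS (fun i => w i - wstar i))
    (hvY : 0 < varS Y)
    (hR2 : varS (fun i => w i - wstar i) / varS wstar < 1) :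
    |mS (fun i => w i * Y i) - mS (fun i => wstar i * Y i)|
      ≤ Real.sqrt (varS Y * varS w *
          ((varS (fun i => w i - wstar i) / varS wstar)
            / (1 - varS (fun i => w i - wstar i) / varS wstar))) ∧
    (|mS (fun i => w i * Y i) - mS (fun i => wstar i * Y i)|
        = Real.sqrt (varS Y * varS w *
            ((varS (fun i => w i - wstar i) / varS wstar)
              / (1 - varS (fun i => w i - wstar i) / varS wstar)))
      ↔ |covS (fun i => w i - wstar i) Y
            / Real.sqrt (varS (fun i => w i - wstar i) * varS Y)| = 1) := by
  set ε : S → ℝ := fun i => w i - wstar i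
  have hsplit : varS wstar = varS w + varS ε := varS_eq_add_of_covS_sub_eq_zero hproj
  have hvw : 0 < varS w := by
    have := (div_lt_one hvws).mp hR2
    linarith
  have hbound : varS Y * varS w * ((varS ε / varS wstar) / (1 - varS ε / varS wstar))
      = varS ε * varS Y := by
    rw [mul_assoc, div_one_sub_div_of_eq_add hvw.ne' hsplit hvws.ne', mul_comm]
  have hsqrt_pos : 0 < Real.sqrt (varS ε * varS Y) := Real.sqrt_pos.mpr (by positivity)
  rw [mS_mul_sub_mS_mul_eq_covS (hw.trans hws.symm), hbound, abs_div, abs_of_pos hsqrt_pos,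
    div_eq_one_iff_eq hsqrt_pos.ne']
  exact ⟨abs_covS_le_sqrt ε Y, Iff.rfl⟩
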